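/- arXiv:math/0408150 — 2 statements merged into one kernel-verified Lean document; each statement's English description precedes it below -/
import Mathlib

section
/- Let a > 0 and M > 0. There exists a constant C > 0 such that for all t > 0: ∫_{−∞}^0 errfn( (−y − at)/(M√t) ) (1+|y|)^{−3/2} dy ≤ C (1+t)^{−1/2}. -/
/-!
Split the half-line at `y = -at/2`. Far out, `errfn` is bounded by its total mass
`√π / (2π)` and the weight has tail `∫_{-∞}^{-at/2} (1 + |y|)^{-3/2} = 2 (1 + at/2)^{-1/2}`.
On `[-at/2, 0]` the argument of `errfn` is at most `-(a / 2M) √t`, so the Gaussian tail bound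
`errfn z ≤ (√π / 2π) e^{-z²}` gives a factor `e^{-a²t/4M²}` against the finite total weight.
Both terms are `O((1 + t)^{-1/2})`.
-/

open MeasureTheory Set

noncomputable def errfn (z : ℝ) : ℝ :=
  (1 / (2 * Real.pi)) * ∫ ξ in Set.Iic z, Real.exp (-ξ^2)

open Real Filter Topology

lemma integrable_exp_neg_sq : Integrable fun ξ : ℝ ↦ exp (-ξ ^ 2) := by
  simpa using integrable_exp_neg_mul_sq one_pos

lemma integral_exp_neg_sq : ∫ ξ : ℝ, exp (-ξ ^ 2) = √π := by
  simpa using integral_gaussian 1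

lemma setIntegral_Iic_exp_neg_sq_le (z : ℝ) : ∫ ξ in Iic z, exp (-ξ ^ 2) ≤ √π :=
  integral_exp_neg_sq ▸ setIntegral_le_integral integrable_exp_neg_sq
    (.of_forall fun _ ↦ (exp_pos _).le)

-- For `ξ ≤ z ≤ 0` one has `ξ² ≥ z² + (ξ - z)²`.
lemma setIntegral_Iic_exp_neg_sq_le_of_nonpos {z : ℝ} (hz : z ≤ 0) :
    ∫ ξ in Iic z, exp (-ξ ^ 2) ≤ exp (-z ^ 2) * √π := by
  have hshift : Integrable fun ξ : ℝ ↦ exp (-z ^ 2) * exp (-(ξ - z) ^ 2) :=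
    (integrable_exp_neg_sq.comp_sub_right z).const_mul _
  calc ∫ ξ in Iic z, exp (-ξ ^ 2)
      ≤ ∫ ξ in Iic z, exp (-z ^ 2) * exp (-(ξ - z) ^ 2) := by
        refine setIntegral_mono_on integrable_exp_neg_sq.integrableOn hshift.integrableOn
          measurableSet_Iic fun ξ hξ ↦ ?_
        rw [← exp_add, exp_le_exp]
        nlinarith [mul_nonneg_of_nonpos_of_nonpos hz (sub_nonpos.2 (mem_Iic.1 hξ))]
    _ ≤ ∫ ξ, exp (-z ^ 2) * exp (-(ξ - z) ^ 2) :=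
        setIntegral_le_integral hshift (.of_forall fun _ ↦ by positivity)
    _ = exp (-z ^ 2) * √π := by
        rw [integral_const_mul, integral_sub_right_eq_self (fun ξ ↦ exp (-ξ ^ 2)),
          integral_exp_neg_sq]

lemma errfn_nonneg (z : ℝ) : 0 ≤ errfn z :=
  mul_nonneg (by positivity)
    (setIntegral_nonneg measurableSet_Iic fun _ _ ↦ (exp_pos _).le)

lemma errfn_le (z : ℝ) : errfn z ≤ √π / (2 * π) := by
  calc errfn z ≤ 1 / (2 * π) * √π :=
        mul_le_mul_of_nonneg_left (setIntegral_Iic_exp_neg_sq_le z) (by positivity)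
    _ = √π / (2 * π) := by ring

lemma errfn_le_of_le_neg {z b : ℝ} (hb : 0 ≤ b) (hz : z ≤ -b) :
    errfn z ≤ √π / (2 * π) * exp (-b ^ 2) := by
  have hzb : b ^ 2 ≤ z ^ 2 := by nlinarith
  calc errfn z ≤ 1 / (2 * π) * (exp (-z ^ 2) * √π) :=
        mul_le_mul_of_nonneg_left (setIntegral_Iic_exp_neg_sq_le_of_nonpos (by linarith))
          (by positivity)
    _ ≤ 1 / (2 * π) * (exp (-b ^ 2) * √π) := by gcongr
    _ = √π / (2 * π) * exp (-b ^ 2) := by ring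

lemma integrable_one_add_abs_rpow_neg {p : ℝ} (hp : 1 < p) :
    Integrable fun y : ℝ ↦ (1 + |y|) ^ (-p) :=
  integrable_one_add_norm (by simpa using hp)

lemma integral_Iic_one_add_abs_rpow_neg {p b : ℝ} (hp : 1 < p) (hb : b ≤ 0) :
    ∫ y in Iic b, (1 + |y|) ^ (-p) = (1 - b) ^ (1 - p) / (p - 1) := by
  have hint : IntegrableOn (fun y : ℝ ↦ (1 - y) ^ (-p)) (Iic b) := by
    refine (integrable_one_add_abs_rpow_neg hp).integrableOn.congr_fun
      (fun y hy ↦ ?_) measurableSet_Iic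
    simp [abs_of_nonpos ((mem_Iic.1 hy).trans hb), sub_eq_add_neg]
  have hderiv : ∀ y ∈ Iic b,
      HasDerivAt (fun y ↦ (1 - y) ^ (1 - p) / (p - 1)) ((1 - y) ^ (-p)) y := by
    intro y hy
    have hy : 0 < 1 - y := by linarith [mem_Iic.1 hy]
    refine ((((hasDerivAt_id y).const_sub 1).rpow_const (p := 1 - p) (.inl hy.ne')).div_const
      (p - 1)).congr_deriv ?_
    rw [id, show 1 - p - 1 = -p by ring]
    field_simp [(sub_pos.2 hp).ne']
    ring
  have hlim : Tendsto (fun y : ℝ ↦ (1 - y) ^ (1 - p) / (p - 1)) atBot (𝓝 0) := by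
    have h : Tendsto (fun y : ℝ ↦ 1 - y) atBot atTop :=
      tendsto_atTop_add_const_left _ 1 tendsto_neg_atBot_atTop
    simpa [Function.comp_def] using
      ((tendsto_rpow_neg_atTop (sub_pos.2 hp)).comp h).div_const (p - 1)
  rw [setIntegral_congr_fun measurableSet_Iic (fun y hy ↦ by
    rw [abs_of_nonpos ((mem_Iic.1 hy).trans hb), ← sub_eq_add_neg]),
    integral_Iic_of_hasDerivAt_of_tendsto' hderiv hint hlim, sub_zero]

lemma one_add_mul_rpow_neg_le {c t r : ℝ} (hc : 0 < c) (ht : 0 ≤ t) (hr : 0 ≤ r) :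
    (1 + c * t) ^ (-r) ≤ min 1 c ^ (-r) * (1 + t) ^ (-r) := by
  have hmin : min 1 c * (1 + t) ≤ 1 + c * t := by
    nlinarith [min_le_left 1 c, min_le_right 1 c]
  rw [← mul_rpow (lt_min one_pos hc).le (by positivity)]
  exact rpow_le_rpow_of_nonpos (by positivity) hmin (neg_nonpos.2 hr)

lemma exp_neg_le_one_add_rpow_neg {x r : ℝ} (hx : 0 ≤ x) (hr : r ≤ 1) :
    exp (-x) ≤ (1 + x) ^ (-r) :=
  calc exp (-x) ≤ (1 + x)⁻¹ := by
        rw [exp_neg]; exact inv_anti₀ (by positivity) (by linarith [add_one_le_exp x])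
    _ = (1 + x) ^ (-1 : ℝ) := (rpow_neg_one _).symm
    _ ≤ (1 + x) ^ (-r) := rpow_le_rpow_of_exponent_le (by linarith) (by linarith)

lemma setIntegral_mul_le_of_le_of_le_on_diff {α : Type*} [MeasurableSpace α] {μ : Measure α}
    {S T : Set α} {f w : α → ℝ} {A B : ℝ} (hS : MeasurableSet S) (hT : MeasurableSet T)
    (hST : S ⊆ T) (hw : IntegrableOn w T μ) (hw0 : ∀ y ∈ T, 0 ≤ w y)
    (hf0 : ∀ y ∈ T, 0 ≤ f y) (hfA : ∀ y ∈ S, f y ≤ A) (hfB : ∀ y ∈ T \ S, f y ≤ B)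
    (hB : 0 ≤ B) :
    ∫ y in T, f y * w y ∂μ ≤ A * ∫ y in S, w y ∂μ + B * ∫ y in T, w y ∂μ := by
  have hbound : ∀ y ∈ T, f y * w y ≤ A * S.indicator w y + B * w y := by
    intro y hy
    by_cases hyS : y ∈ S
    · rw [indicator_of_mem hyS]
      nlinarith [hfA y hyS, hw0 y hy]
    · rw [indicator_of_notMem hyS]
      nlinarith [hfB y ⟨hy, hyS⟩, hw0 y hy]
  calc ∫ y in T, f y * w y ∂μ ≤ ∫ y in T, (A * S.indicator w y + B * w y) ∂μ :=
        integral_mono_of_nonneg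
          (ae_restrict_of_forall_mem hT fun y hy ↦ mul_nonneg (hf0 y hy) (hw0 y hy))
          (((hw.indicator hS).const_mul A).add (hw.const_mul B))
          (ae_restrict_of_forall_mem hT hbound)
    _ = A * ∫ y in S, w y ∂μ + B * ∫ y in T, w y ∂μ := by
        rw [integral_add ((hw.indicator hS).const_mul A) (hw.const_mul B), integral_const_mul,
          integral_const_mul, setIntegral_indicator hS, inter_eq_right.2 hST]

theorem errfn_tail_estimate (a M : ℝ) (ha : 0 < a) (hM : 0 < M) :
    ∃ C > 0, ∀ t : ℝ, 0 < t →
      (∫ y in Set.Iic (0:ℝ),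
          errfn ((-y - a*t) / (M * Real.sqrt t)) * (1 + |y|) ^ (-(3/2:ℝ))) ≤
        C * (1 + t) ^ (-(1/2:ℝ)) := by
  set K := √π / (2 * π)
  set c := (a / (2 * M)) ^ 2
  refine ⟨2 * K * (min 1 (a / 2) ^ (-(1/2:ℝ)) + min 1 c ^ (-(1/2:ℝ))), by positivity,
    fun t ht ↦ ?_⟩
  have hs : 0 ≤ a / 2 * t := by positivity
  have hnear : ∀ y ∈ Iic (0:ℝ) \ Iic (-(a / 2 * t)),
      errfn ((-y - a * t) / (M * √t)) ≤ K * exp (-(c * t)) := by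
    rintro y ⟨-, hy⟩
    rw [mem_Iic, not_le] at hy
    have hz : (-y - a * t) / (M * √t) ≤ -(a / (2 * M) * √t) := by
      rw [div_le_iff₀ (by positivity), neg_mul, mul_mul_mul_comm, mul_self_sqrt ht.le]
      field_simp
      linarith
    calc errfn _ ≤ K * exp (-(a / (2 * M) * √t) ^ 2) := errfn_le_of_le_neg (by positivity) hz
      _ = K * exp (-(c * t)) := by rw [mul_pow, sq_sqrt ht.le]
  have hsplit := setIntegral_mul_le_of_le_of_le_on_diff (w := fun y ↦ (1 + |y|) ^ (-(3/2:ℝ)))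
    measurableSet_Iic measurableSet_Iic (Iic_subset_Iic.2 (neg_nonpos.2 hs))
    (integrable_one_add_abs_rpow_neg (by norm_num)).integrableOn
    (fun y _ ↦ by positivity) (fun y _ ↦ errfn_nonneg _) (fun y _ ↦ errfn_le _) hnear
    (by positivity)
  rw [integral_Iic_one_add_abs_rpow_neg (by norm_num) (neg_nonpos.2 hs),
    integral_Iic_one_add_abs_rpow_neg (by norm_num) le_rfl] at hsplit
  calc _ ≤ _ := hsplit
    _ = 2 * K * (1 + a / 2 * t) ^ (-(1/2:ℝ)) + 2 * K * exp (-(c * t)) := by norm_num; ring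
    _ ≤ 2 * K * (min 1 (a / 2) ^ (-(1/2:ℝ)) * (1 + t) ^ (-(1/2:ℝ)))
        + 2 * K * (min 1 c ^ (-(1/2:ℝ)) * (1 + t) ^ (-(1/2:ℝ))) := by
      gcongr
      · exact one_add_mul_rpow_neg_le (by positivity) ht.le (by norm_num)
      · exact (exp_neg_le_one_add_rpow_neg (by positivity) (by norm_num)).trans
          (one_add_mul_rpow_neg_le (by positivity) ht.le (by norm_num))
    _ = _ := by ring
end

section
/- Let a > 0, b < 0, and M > 0. There exists a constant C > 0 such that for all t > 0: ∫₀^t ∫_{−∞}^0 (t−s)^{−1} e^{−(y+a(t−s))²/(M(t−s))} (1+s)^{−1/2} s^{−1/2} e^{−(y−bs)²/(Ms)} dy ds ≤ C (1+t)^{−1}. -/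
/-!
For fixed `s`, completing the square gives
`(y - μ)² / p + (y - ν)² / q ≥ (y - μ)² / (2p) + (μ - ν)² / (2p + q)`, so the `y`-integral is at
most `√(2πM)` times
`crossingKernel a b (2M) t s = (t-s)^{-1/2} (1+s)^{-1/2} s^{-1/2} exp(-(a(t-s)+bs)² / (2Mt))`.
Since `a > 0 > b`, this exponent vanishes only at the crossing time `s = at/(a-b)`, at
distance `≍ t` from both endpoints. Away from it the Gaussian factor is `O(1/t)` while
`(t-s)^{-1/2} s^{-1/2}` has bounded integral; near it `s` and `t - s` are `≍ t`, so the algebraic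
factor is `O(t^{-3/2})`, against a Gaussian in `s` of integral `O(√t)`.
-/

open MeasureTheory Set Real

lemma sq_sub_div_add_le {p q : ℝ} (hp : 0 < p) (hq : 0 < q) (u v : ℝ) :
    (u - v) ^ 2 / (p + q) ≤ u ^ 2 / p + v ^ 2 / q := by
  rw [div_add_div _ _ hp.ne' hq.ne', div_le_div_iff₀ (by positivity) (by positivity)]
  nlinarith [sq_nonneg (u * q + v * p), mul_pos hp hq]

lemma exp_neg_sq_div_mul_exp_neg_sq_div_le {p q : ℝ} (hp : 0 < p) (hq : 0 < q) (y μ ν : ℝ) :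
    exp (-(y - μ) ^ 2 / p) * exp (-(y - ν) ^ 2 / q) ≤
      exp (-(μ - ν) ^ 2 / (2 * p + q)) * exp (-(y - μ) ^ 2 / (2 * p)) := by
  rw [← exp_add, ← exp_add, exp_le_exp]
  have key := sq_sub_div_add_le hq (by positivity : 0 < 2 * p) (y - ν) (y - μ)
  have half : (y - μ) ^ 2 / p = (y - μ) ^ 2 / (2 * p) + (y - μ) ^ 2 / (2 * p) := by
    field_simp; ring
  rw [show y - ν - (y - μ) = μ - ν by ring, add_comm q] at key
  simp only [neg_div]
  linarith

lemma integrable_exp_neg_sq_sub_div (μ : ℝ) {p : ℝ} (hp : 0 < p) :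
    Integrable fun y : ℝ => exp (-(y - μ) ^ 2 / p) := by
  convert (integrable_exp_neg_mul_sq (inv_pos.2 hp)).comp_sub_right μ using 3
  ring

lemma integral_exp_neg_sq_sub_div (μ p : ℝ) :
    ∫ y : ℝ, exp (-(y - μ) ^ 2 / p) = √(π * p) := by
  have h := integral_sub_right_eq_self (μ := volume) (fun y : ℝ => exp (-p⁻¹ * y ^ 2)) μ
  rw [integral_gaussian, div_inv_eq_mul] at h
  convert h using 4
  ring

lemma setIntegral_exp_neg_sq_div_mul_exp_neg_sq_div_le {p q : ℝ} (hp : 0 < p) (hq : 0 < q)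
    (μ ν : ℝ) (S : Set ℝ) :
    ∫ y in S, exp (-(y - μ) ^ 2 / p) * exp (-(y - ν) ^ 2 / q) ≤
      √(π * (2 * p)) * exp (-(μ - ν) ^ 2 / (2 * p + q)) := by
  have hint := (integrable_exp_neg_sq_sub_div μ (by positivity : 0 < 2 * p)).const_mul
    (exp (-(μ - ν) ^ 2 / (2 * p + q)))
  calc ∫ y in S, exp (-(y - μ) ^ 2 / p) * exp (-(y - ν) ^ 2 / q)
      ≤ ∫ y in S, exp (-(μ - ν) ^ 2 / (2 * p + q)) * exp (-(y - μ) ^ 2 / (2 * p)) :=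
        integral_mono_of_nonneg (ae_of_all _ fun y => by positivity) hint.integrableOn
          (ae_of_all _ fun y => exp_neg_sq_div_mul_exp_neg_sq_div_le hp hq y μ ν)
    _ ≤ ∫ y, exp (-(μ - ν) ^ 2 / (2 * p + q)) * exp (-(y - μ) ^ 2 / (2 * p)) :=
        setIntegral_le_integral hint (ae_of_all _ fun y => by positivity)
    _ = √(π * (2 * p)) * exp (-(μ - ν) ^ 2 / (2 * p + q)) := by
        rw [integral_const_mul, integral_exp_neg_sq_sub_div, mul_comm]

lemma integrable_exp_neg_sq_affine {k : ℝ} (hk : k ≠ 0) (c : ℝ) {p : ℝ} (hp : 0 < p) :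
    Integrable fun s : ℝ => exp (-(c - k * s) ^ 2 / p) := by
  convert integrable_exp_neg_sq_sub_div (c / k) (by positivity : 0 < p / k ^ 2) using 3
  field_simp
  ring

lemma integral_exp_neg_sq_affine {k : ℝ} (hk : k ≠ 0) (c p : ℝ) :
    ∫ s : ℝ, exp (-(c - k * s) ^ 2 / p) = √(π * p) / |k| := by
  have h := integral_exp_neg_sq_sub_div (c / k) (p / k ^ 2)
  rw [← mul_div_assoc, sqrt_div' _ (sq_nonneg k), sqrt_sq_eq_abs] at h
  rw [← h]
  congr with s
  congr 1
  field_simp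
  ring

lemma rpow_neg_half_eq_inv_mul_sqrt {x : ℝ} (hx : 0 ≤ x) : x ^ (-(1/2:ℝ)) = x⁻¹ * √x := by
  rw [rpow_neg hx, ← sqrt_eq_rpow]
  rcases hx.eq_or_lt with rfl | hx
  · simp
  · field_simp
    rw [sq_sqrt hx.le]

noncomputable def crossingKernel (a b D t s : ℝ) : ℝ :=
  (t - s) ^ (-(1/2:ℝ)) * ((1 + s) ^ (-(1/2:ℝ)) * s ^ (-(1/2:ℝ))) *
    exp (-(a * (t - s) + b * s) ^ 2 / (D * t))

lemma setIntegral_interaction_le_crossingKernel {a b M t s : ℝ} (hM : 0 < M) (hs : 0 < s)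
    (hst : s < t) (S : Set ℝ) :
    ∫ y in S, (t - s)⁻¹ * exp (-(y + a * (t - s)) ^ 2 / (M * (t - s))) *
        ((1 + s) ^ (-(1/2:ℝ)) * s ^ (-(1/2:ℝ))) * exp (-(y - b * s) ^ 2 / (M * s)) ≤
      √(2 * π * M) * crossingKernel a b (2 * M) t s := by
  have hτ : 0 < t - s := by linarith
  set P := (1 + s) ^ (-(1/2:ℝ)) * s ^ (-(1/2:ℝ))
  have hexp : exp (-(-(a * (t - s)) - b * s) ^ 2 / (2 * (M * (t - s)) + M * s)) ≤
      exp (-(a * (t - s) + b * s) ^ 2 / (2 * M * t)) := by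
    rw [exp_le_exp, neg_div, neg_div, neg_le_neg_iff, show -(a * (t - s)) - b * s =
      -(a * (t - s) + b * s) by ring, neg_sq]
    exact div_le_div_of_nonneg_left (sq_nonneg _) (by positivity) (by nlinarith)
  calc _ = ((t - s)⁻¹ * P) * ∫ y in S, exp (-(y - -(a * (t - s))) ^ 2 / (M * (t - s))) *
        exp (-(y - b * s) ^ 2 / (M * s)) := by
        rw [← integral_const_mul]
        congr with y
        rw [sub_neg_eq_add]
        ring
    _ ≤ ((t - s)⁻¹ * P) * (√(π * (2 * (M * (t - s)))) *
          exp (-(-(a * (t - s)) - b * s) ^ 2 / (2 * (M * (t - s)) + M * s))) :=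
        mul_le_mul_of_nonneg_left (setIntegral_exp_neg_sq_div_mul_exp_neg_sq_div_le
          (by positivity) (by positivity) _ _ S) (by positivity)
    _ ≤ ((t - s)⁻¹ * P) * (√(π * (2 * (M * (t - s)))) *
          exp (-(a * (t - s) + b * s) ^ 2 / (2 * M * t))) := by gcongr
    _ = √(2 * π * M) * crossingKernel a b (2 * M) t s := by
        rw [crossingKernel, rpow_neg_half_eq_inv_mul_sqrt hτ.le,
          show π * (2 * (M * (t - s))) = 2 * π * M * (t - s) by ring, sqrt_mul (by positivity)]
        ring

lemma rpow_neg_half_mul_rpow_neg_half_le {t s : ℝ} (hs : 0 < s) (hst : s < t) :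
    (t - s) ^ (-(1/2:ℝ)) * s ^ (-(1/2:ℝ)) ≤
      (t / 2) ^ (-(1/2:ℝ)) * (s ^ (-(1/2:ℝ)) + (t - s) ^ (-(1/2:ℝ))) := by
  have hs' : 0 ≤ s ^ (-(1/2:ℝ)) := by positivity
  have hts' : 0 ≤ (t - s) ^ (-(1/2:ℝ)) := rpow_nonneg (by linarith) _
  rcases le_total s (t / 2) with h | h
  · have : (t - s) ^ (-(1/2:ℝ)) ≤ (t / 2) ^ (-(1/2:ℝ)) :=
      rpow_le_rpow_of_nonpos (by linarith) (by linarith) (by norm_num)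
    nlinarith
  · have : s ^ (-(1/2:ℝ)) ≤ (t / 2) ^ (-(1/2:ℝ)) :=
      rpow_le_rpow_of_nonpos (by linarith) h (by norm_num)
    nlinarith

lemma intervalIntegrable_rpow_neg_half_add_reflect (t : ℝ) :
    IntervalIntegrable (fun s => s ^ (-(1/2:ℝ)) + (t - s) ^ (-(1/2:ℝ))) volume 0 t := by
  have h := intervalIntegral.intervalIntegrable_rpow' (a := 0) (b := t) (r := -(1/2:ℝ))
    (by norm_num)
  refine h.add ?_
  simpa using (h.comp_sub_left t).symm

lemma integral_rpow_neg_half_add_reflect (t : ℝ) :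
    ∫ s in (0:ℝ)..t, (s ^ (-(1/2:ℝ)) + (t - s) ^ (-(1/2:ℝ))) = 4 * √t := by
  have h := intervalIntegral.intervalIntegrable_rpow' (a := 0) (b := t) (r := -(1/2:ℝ))
    (by norm_num)
  rw [intervalIntegral.integral_add h (by simpa using (h.comp_sub_left t).symm),
    intervalIntegral.integral_comp_sub_left (fun s => s ^ (-(1/2:ℝ))), sub_self, sub_zero,
    integral_rpow (Or.inl (by norm_num)), sqrt_eq_rpow]
  norm_num
  ring

lemma integrableOn_rpow_neg_half_add_reflect {t : ℝ} (ht : 0 ≤ t) :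
    IntegrableOn (fun s => s ^ (-(1/2:ℝ)) + (t - s) ^ (-(1/2:ℝ))) (Ioo 0 t) :=
  (intervalIntegrable_iff_integrableOn_Ioo_of_le ht).1
    (intervalIntegrable_rpow_neg_half_add_reflect t)

lemma integrableOn_rpow_neg_half_mul_rpow_neg_half {t : ℝ} (ht : 0 < t) :
    IntegrableOn (fun s => (t - s) ^ (-(1/2:ℝ)) * s ^ (-(1/2:ℝ))) (Ioo 0 t) := by
  refine ((integrableOn_rpow_neg_half_add_reflect ht.le).const_mul ((t / 2) ^ (-(1/2:ℝ)))).mono'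
    (by fun_prop) ((ae_restrict_iff' measurableSet_Ioo).2 (ae_of_all _ fun s hs => ?_))
  rw [norm_of_nonneg (mul_nonneg (rpow_nonneg (by linarith [hs.2]) _) (rpow_nonneg hs.1.le _))]
  exact rpow_neg_half_mul_rpow_neg_half_le hs.1 hs.2

lemma setIntegral_rpow_neg_half_mul_rpow_neg_half_le {t : ℝ} (ht : 0 < t) :
    ∫ s in Ioo 0 t, (t - s) ^ (-(1/2:ℝ)) * s ^ (-(1/2:ℝ)) ≤ 4 * √2 := by
  calc ∫ s in Ioo 0 t, (t - s) ^ (-(1/2:ℝ)) * s ^ (-(1/2:ℝ))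
      ≤ ∫ s in Ioo 0 t, (t / 2) ^ (-(1/2:ℝ)) * (s ^ (-(1/2:ℝ)) + (t - s) ^ (-(1/2:ℝ))) :=
        integral_mono_of_nonneg
          ((ae_restrict_iff' measurableSet_Ioo).2 (ae_of_all _ fun s hs =>
            mul_nonneg (rpow_nonneg (by linarith [hs.2]) _) (rpow_nonneg hs.1.le _)))
          ((integrableOn_rpow_neg_half_add_reflect ht.le).const_mul _)
          ((ae_restrict_iff' measurableSet_Ioo).2 (ae_of_all _ fun s hs =>
            rpow_neg_half_mul_rpow_neg_half_le hs.1 hs.2))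
    _ = 4 * √2 := by
      rw [← integral_Ioc_eq_integral_Ioo, ← intervalIntegral.integral_of_le ht.le,
        intervalIntegral.integral_const_mul, integral_rpow_neg_half_add_reflect,
        rpow_neg (by positivity), ← sqrt_eq_rpow, sqrt_div' _ zero_le_two]
      field_simp

lemma exp_neg_sq_div_le_inv_one_add {D t X m : ℝ} (hD : 0 < D) (ht : 0 < t) (hm : 0 ≤ m)
    (hX : m * t ≤ |X|) : exp (-X ^ 2 / (D * t)) ≤ (1 + m ^ 2 / D * t)⁻¹ := by
  have hsq : (m * t) ^ 2 ≤ X ^ 2 := by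
    rw [← sq_abs X]
    exact pow_le_pow_left₀ (by positivity) hX 2
  calc exp (-X ^ 2 / (D * t)) ≤ exp (-(m ^ 2 / D * t)) := by
        rw [exp_le_exp, neg_div, neg_le_neg_iff, le_div_iff₀ (by positivity)]
        field_simp
        nlinarith
    _ = (exp (m ^ 2 / D * t))⁻¹ := exp_neg _
    _ ≤ (1 + m ^ 2 / D * t)⁻¹ :=
        inv_anti₀ (by positivity) (by linarith [add_one_le_exp (m ^ 2 / D * t)])

lemma inv_one_add_mul_le {κ t : ℝ} (hκ : 0 < κ) (ht : 0 ≤ t) :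
    (1 + κ * t)⁻¹ ≤ (1 + κ⁻¹) * (1 + t)⁻¹ := by
  rw [← div_eq_mul_inv, inv_le_iff_one_le_mul₀ (by positivity), div_mul_eq_mul_div,
    one_le_div (by positivity)]
  field_simp
  nlinarith [mul_nonneg ht (sq_nonneg κ)]

lemma rpow_neg_half_triple_le {c t s : ℝ} (hc : 0 < c) (ht : 1 ≤ t) (hs : c * t ≤ s)
    (hts : c * t ≤ t - s) :
    (t - s) ^ (-(1/2:ℝ)) * ((1 + s) ^ (-(1/2:ℝ)) * s ^ (-(1/2:ℝ))) ≤
      2 * (c ^ (-(1/2:ℝ))) ^ 3 * (1 + t)⁻¹ * t ^ (-(1/2:ℝ)) := by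
  have ht0 : 0 < t := by linarith
  have hct : 0 < c * t := by positivity
  have hle : ∀ x, c * t ≤ x → x ^ (-(1/2:ℝ)) ≤ c ^ (-(1/2:ℝ)) * t ^ (-(1/2:ℝ)) := fun x hx => by
    rw [← mul_rpow hc.le ht0.le]
    exact rpow_le_rpow_of_nonpos hct hx (by norm_num)
  have hsq : (t ^ (-(1/2:ℝ))) ^ 2 = t⁻¹ := by
    rw [← rpow_natCast, ← rpow_mul ht0.le]
    norm_num
    exact rpow_neg_one t
  have hinv : t⁻¹ ≤ 2 * (1 + t)⁻¹ := by
    rw [← div_eq_mul_inv, inv_le_iff_one_le_mul₀ ht0, div_mul_eq_mul_div,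
      one_le_div (by positivity)]
    linarith
  have hct' : 0 ≤ c ^ (-(1/2:ℝ)) * t ^ (-(1/2:ℝ)) := by positivity
  calc (t - s) ^ (-(1/2:ℝ)) * ((1 + s) ^ (-(1/2:ℝ)) * s ^ (-(1/2:ℝ)))
      ≤ (c ^ (-(1/2:ℝ)) * t ^ (-(1/2:ℝ))) *
          ((c ^ (-(1/2:ℝ)) * t ^ (-(1/2:ℝ))) * (c ^ (-(1/2:ℝ)) * t ^ (-(1/2:ℝ)))) := by
        have h1 := hle (t - s) hts
        have h2 := hle (1 + s) (by linarith)
        have h3 := hle s hs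
        have p1 : 0 ≤ (1 + s) ^ (-(1/2:ℝ)) := rpow_nonneg (by linarith [hct]) _
        have p2 : 0 ≤ s ^ (-(1/2:ℝ)) := rpow_nonneg (by linarith [hct]) _
        gcongr
    _ = (c ^ (-(1/2:ℝ))) ^ 3 * (t ^ (-(1/2:ℝ))) ^ 2 * t ^ (-(1/2:ℝ)) := by ring
    _ ≤ (c ^ (-(1/2:ℝ))) ^ 3 * (2 * (1 + t)⁻¹) * t ^ (-(1/2:ℝ)) := by
        rw [hsq]; gcongr
    _ = 2 * (c ^ (-(1/2:ℝ))) ^ 3 * (1 + t)⁻¹ * t ^ (-(1/2:ℝ)) := by ring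

lemma exp_neg_sq_div_le_of_small_or_far {D t X m : ℝ} (hD : 0 < D) (ht : 0 < t) (hm : 0 < m)
    (h : t ≤ 1 ∨ m * t ≤ |X|) : exp (-X ^ 2 / (D * t)) ≤ (2 + (m ^ 2 / D)⁻¹) * (1 + t)⁻¹ := by
  rcases h with hsmall | hfar
  · calc exp (-X ^ 2 / (D * t)) ≤ 1 :=
          exp_le_one_iff.2 (by rw [neg_div]; exact neg_nonpos.2 (by positivity))
      _ ≤ 2 * (1 + t)⁻¹ := by rw [← div_eq_mul_inv, one_le_div (by positivity)]; linarith
      _ ≤ _ := by gcongr; linarith [inv_pos.2 (by positivity : 0 < m ^ 2 / D)]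
  · calc exp (-X ^ 2 / (D * t)) ≤ (1 + m ^ 2 / D * t)⁻¹ :=
          exp_neg_sq_div_le_inv_one_add hD ht hm.le hfar
      _ ≤ (1 + (m ^ 2 / D)⁻¹) * (1 + t)⁻¹ := inv_one_add_mul_le (by positivity) ht.le
      _ ≤ _ := by gcongr; norm_num

lemma mul_le_and_mul_le_sub_of_abs_lt {a b m t s : ℝ} (hab : b < a) (ht : 0 ≤ t) (hma : 2 * m ≤ a)
    (hmb : 2 * m ≤ -b) (h : |a * (t - s) + b * s| < m * t) :
    m / (a - b) * t ≤ s ∧ m / (a - b) * t ≤ t - s := by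
  have hk : 0 < a - b := by linarith
  obtain ⟨hlo, hhi⟩ := abs_lt.1 h
  rw [div_mul_eq_mul_div, div_le_iff₀ hk, div_le_iff₀ hk]
  constructor <;> nlinarith

lemma crossingKernel_le {a b D : ℝ} (ha : 0 < a) (hb : b < 0) (hD : 0 < D) :
    ∃ A B : ℝ, 0 < A ∧ 0 ≤ B ∧ ∀ t s : ℝ, 0 < s → s < t →
      crossingKernel a b D t s ≤ (1 + t)⁻¹ * (A * ((t - s) ^ (-(1/2:ℝ)) * s ^ (-(1/2:ℝ))) +
        B * (t ^ (-(1/2:ℝ)) * exp (-(a * (t - s) + b * s) ^ 2 / (D * t)))) := by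
  set m := min a (-b) / 2 with hm_def
  have hm : 0 < m := half_pos (lt_min ha (by linarith))
  have hma : 2 * m ≤ a := by linarith [min_le_left a (-b)]
  have hmb : 2 * m ≤ -b := by linarith [min_le_right a (-b)]
  set c := m / (a - b)
  have hc : 0 < c := div_pos hm (by linarith)
  refine ⟨2 + (m ^ 2 / D)⁻¹, 2 * (c ^ (-(1/2:ℝ))) ^ 3, by positivity, by positivity,
    fun t s hs hst => ?_⟩
  have ht : 0 < t := hs.trans hst
  set E := exp (-(a * (t - s) + b * s) ^ 2 / (D * t))
  have hf : 0 ≤ (t - s) ^ (-(1/2:ℝ)) * s ^ (-(1/2:ℝ)) :=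
    mul_nonneg (rpow_nonneg (by linarith) _) (rpow_nonneg hs.le _)
  have ht' : 0 ≤ (1 + t)⁻¹ := by positivity
  by_cases hfar : t ≤ 1 ∨ m * t ≤ |a * (t - s) + b * s|
  · have hone : (1 + s) ^ (-(1/2:ℝ)) ≤ 1 :=
      rpow_le_one_of_one_le_of_nonpos (by linarith) (by norm_num)
    calc crossingKernel a b D t s
        = ((t - s) ^ (-(1/2:ℝ)) * s ^ (-(1/2:ℝ))) * ((1 + s) ^ (-(1/2:ℝ)) * E) := by
          rw [crossingKernel]; ring
      _ ≤ ((t - s) ^ (-(1/2:ℝ)) * s ^ (-(1/2:ℝ))) * (1 * ((2 + (m ^ 2 / D)⁻¹) * (1 + t)⁻¹)) := by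
          gcongr
          exact exp_neg_sq_div_le_of_small_or_far hD ht hm hfar
      _ = (1 + t)⁻¹ * ((2 + (m ^ 2 / D)⁻¹) * ((t - s) ^ (-(1/2:ℝ)) * s ^ (-(1/2:ℝ)))) := by ring
      _ ≤ _ := mul_le_mul_of_nonneg_left (le_add_of_nonneg_right (by positivity)) ht'
  · push Not at hfar
    obtain ⟨hs', hts'⟩ := mul_le_and_mul_le_sub_of_abs_lt (by linarith) ht.le hma hmb hfar.2
    calc crossingKernel a b D t s
        ≤ 2 * (c ^ (-(1/2:ℝ))) ^ 3 * (1 + t)⁻¹ * t ^ (-(1/2:ℝ)) * E := by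
          rw [crossingKernel]
          exact mul_le_mul_of_nonneg_right (rpow_neg_half_triple_le hc hfar.1.le hs' hts')
            (exp_nonneg _)
      _ = (1 + t)⁻¹ * (2 * (c ^ (-(1/2:ℝ))) ^ 3 * (t ^ (-(1/2:ℝ)) * E)) := by ring
      _ ≤ _ := mul_le_mul_of_nonneg_left (le_add_of_nonneg_left (by positivity)) ht'

lemma integrableOn_crossingKernel {a b D t : ℝ} (hD : 0 < D) (ht : 0 < t) :
    IntegrableOn (crossingKernel a b D t) (Ioo 0 t) := by
  refine (integrableOn_rpow_neg_half_mul_rpow_neg_half ht).mono'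
    (by unfold crossingKernel; fun_prop)
    ((ae_restrict_iff' measurableSet_Ioo).2 (ae_of_all _ fun s ⟨hs, hst⟩ => ?_))
  have hone : (1 + s) ^ (-(1/2:ℝ)) ≤ 1 :=
    rpow_le_one_of_one_le_of_nonpos (by linarith) (by norm_num)
  have hE : exp (-(a * (t - s) + b * s) ^ 2 / (D * t)) ≤ 1 :=
    exp_le_one_iff.2 (by rw [neg_div]; exact neg_nonpos.2 (by positivity))
  have hts : 0 ≤ (t - s) ^ (-(1/2:ℝ)) := rpow_nonneg (by linarith) _
  have hs' : 0 ≤ s ^ (-(1/2:ℝ)) := rpow_nonneg hs.le _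
  rw [norm_of_nonneg (by unfold crossingKernel; positivity), crossingKernel]
  calc (t - s) ^ (-(1/2:ℝ)) * ((1 + s) ^ (-(1/2:ℝ)) * s ^ (-(1/2:ℝ))) *
        exp (-(a * (t - s) + b * s) ^ 2 / (D * t))
      ≤ (t - s) ^ (-(1/2:ℝ)) * (1 * s ^ (-(1/2:ℝ))) * 1 := by gcongr
    _ = (t - s) ^ (-(1/2:ℝ)) * s ^ (-(1/2:ℝ)) := by ring

lemma integrable_exp_neg_sq_crossing {a b D t : ℝ} (hab : b < a) (hDt : 0 < D * t) :
    Integrable fun s => exp (-(a * (t - s) + b * s) ^ 2 / (D * t)) := by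
  convert integrable_exp_neg_sq_affine (sub_pos.2 hab).ne' (a * t) hDt using 4
  ring

lemma integral_exp_neg_sq_crossing {a b D t : ℝ} (hab : b < a) :
    ∫ s, exp (-(a * (t - s) + b * s) ^ 2 / (D * t)) = √(π * (D * t)) / (a - b) := by
  rw [← abs_of_pos (sub_pos.2 hab), ← integral_exp_neg_sq_affine (sub_pos.2 hab).ne' (a * t)]
  congr with s
  ring_nf

lemma setIntegral_crossingKernel_le {a b D : ℝ} (ha : 0 < a) (hb : b < 0) (hD : 0 < D) :
    ∃ C > 0, ∀ t > 0, ∫ s in Ioo 0 t, crossingKernel a b D t s ≤ C * (1 + t)⁻¹ := by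
  obtain ⟨A, B, hA, hB, hK⟩ := crossingKernel_le ha hb hD
  have hab : b < a := by linarith
  refine ⟨A * (4 * √2) + B * (√(π * D) / (a - b)), by positivity, fun t ht => ?_⟩
  have hf := integrableOn_rpow_neg_half_mul_rpow_neg_half ht
  have hE := (integrable_exp_neg_sq_crossing (D := D) (t := t) hab (by positivity)).integrableOn
    (s := Ioo 0 t)
  have hEt : t ^ (-(1/2:ℝ)) * √(π * (D * t)) = √(π * D) := by
    rw [← mul_assoc, sqrt_mul (by positivity), rpow_neg_half_eq_inv_mul_sqrt ht.le]
    field_simp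
    rw [sq_sqrt ht.le]
  calc ∫ s in Ioo 0 t, crossingKernel a b D t s
      ≤ ∫ s in Ioo 0 t, (1 + t)⁻¹ * (A * ((t - s) ^ (-(1/2:ℝ)) * s ^ (-(1/2:ℝ))) +
          B * (t ^ (-(1/2:ℝ)) * exp (-(a * (t - s) + b * s) ^ 2 / (D * t)))) :=
        setIntegral_mono_on (integrableOn_crossingKernel hD ht)
          (((hf.const_mul A).add ((hE.const_mul _).const_mul B)).const_mul _) measurableSet_Ioo
          fun s hs => hK t s hs.1 hs.2
    _ = (1 + t)⁻¹ * (A * ∫ s in Ioo 0 t, (t - s) ^ (-(1/2:ℝ)) * s ^ (-(1/2:ℝ))) +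
          (1 + t)⁻¹ * (B * (t ^ (-(1/2:ℝ)) *
            ∫ s in Ioo 0 t, exp (-(a * (t - s) + b * s) ^ 2 / (D * t)))) := by
        rw [integral_const_mul, integral_add (hf.const_mul A) ((hE.const_mul _).const_mul B),
          integral_const_mul, integral_const_mul, integral_const_mul, mul_add]
    _ ≤ (1 + t)⁻¹ * (A * (4 * √2)) +
          (1 + t)⁻¹ * (B * (t ^ (-(1/2:ℝ)) * (√(π * (D * t)) / (a - b)))) := by
        gcongr
        · exact setIntegral_rpow_neg_half_mul_rpow_neg_half_le ht
        · rw [← integral_exp_neg_sq_crossing hab]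
          exact setIntegral_le_integral (integrable_exp_neg_sq_crossing hab (by positivity))
            (ae_of_all _ fun s => by positivity)
    _ = (A * (4 * √2) + B * (√(π * D) / (a - b))) * (1 + t)⁻¹ := by
        rw [← hEt]; ring

theorem excited_quadratic_interaction (a b M : ℝ)
    (ha : 0 < a) (hb : b < 0) (hM : 0 < M) :
    ∃ C > 0, ∀ t : ℝ, 0 < t →
      (∫ s in Set.Ioo (0:ℝ) t, ∫ y in Set.Iic (0:ℝ),
          (t - s)⁻¹ * Real.exp (-(y + a*(t-s))^2 / (M*(t-s))) *
            ((1 + s) ^ (-(1/2:ℝ)) * s ^ (-(1/2:ℝ))) *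
            Real.exp (-(y - b*s)^2 / (M*s))) ≤
        C * (1 + t)⁻¹ := by
  obtain ⟨C, hC, hJ⟩ := setIntegral_crossingKernel_le ha hb (by positivity : 0 < 2 * M)
  refine ⟨√(2 * π * M) * C, by positivity, fun t ht => ?_⟩
  calc _ ≤ ∫ s in Ioo 0 t, √(2 * π * M) * crossingKernel a b (2 * M) t s :=
        integral_mono_of_nonneg
          ((ae_restrict_iff' measurableSet_Ioo).2 (ae_of_all _ fun s ⟨hs, hst⟩ =>
            integral_nonneg fun y => by
              have : 0 ≤ (t - s)⁻¹ := inv_nonneg.2 (by linarith)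
              positivity))
          ((integrableOn_crossingKernel (by positivity) ht).const_mul _)
          ((ae_restrict_iff' measurableSet_Ioo).2 (ae_of_all _ fun s ⟨hs, hst⟩ =>
            setIntegral_interaction_le_crossingKernel hM hs hst _))
    _ = √(2 * π * M) * ∫ s in Ioo 0 t, crossingKernel a b (2 * M) t s := integral_const_mul _ _
    _ ≤ √(2 * π * M) * (C * (1 + t)⁻¹) := by gcongr; exact hJ t ht
    _ = √(2 * π * M) * C * (1 + t)⁻¹ := (mul_assoc _ _ _).symm
end
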